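/- In the setting of the Volterra sewing lemma (E Banach, β > 1, κ ∈ (0,1), Ξ : Δ₃ → E with ‖δΞ‖_{(β,κ),1} < ∞, and I(Ξ^τ)_{ts} the limit of the Riemann sums Σ_{[u,v]∈P} Ξ^τ_{vu}), assume additionally that ‖δΞ‖_{(β,κ),1,2} < ∞. Then there is a constant C, depending only on β and κ, such that for all 0 ≤ s < t < τ' < τ ≤ T and every η ∈ [0,1]: ‖(I(Ξ^τ)_{ts} − I(Ξ^{τ'})_{ts}) − (Ξ^τ_{ts} − Ξ^{τ'}_{ts})‖ ≤ C ‖δΞ‖_{(β,κ),1,2} · (τ−τ')^{η}(τ'−t)^{−η} · min((τ'−t)^{−κ}(t−s)^{β}, (τ'−s)^{β−κ}). -/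

import Mathlib

/-!
STATEMENT 8 (Lemma 4.2 (iii) of the paper): control of the sewn integral in
the upper (Volterra) parameter.  In the setting of the Volterra sewing lemma,
if in addition `‖δΞ‖_{(β,κ),1,2} < ∞` (encoded by the constant `A₂`), then
`‖(I(Ξ^τ) - I(Ξ^{τ'})) - (Ξ^τ - Ξ^{τ'})‖` is bounded by
`C A₂ (τ-τ')^η (τ'-t)^(-η) min((τ'-t)^(-κ)(t-s)^β, (τ'-s)^(β-κ))`
with `C` depending only on `β` and `κ`.
-/

def IsPartition (s t : ℝ) (N : ℕ) (π : ℕ → ℝ) : Prop :=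
  π 0 = s ∧ π N = t ∧ ∀ i < N, π i < π (i + 1)

def RSLimit {E : Type*} [NormedAddCommGroup E] (s t : ℝ) (F : ℝ → ℝ → E) (I : E) : Prop :=
  ∀ ε > 0, ∃ δ > 0, ∀ (N : ℕ) (π : ℕ → ℝ), IsPartition s t N π →
    (∀ i < N, π (i + 1) - π i < δ) →
    ‖(∑ i ∈ Finset.range N, F (π i) (π (i + 1))) - I‖ < ε

noncomputable def mSing (τ t s κ β : ℝ) : ℝ :=
  if t < τ then min ((τ - t) ^ (-κ) * (t - s) ^ β) ((τ - s) ^ (β - κ))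
  else (τ - s) ^ (β - κ)

section SewingHelpers
open Finset


lemma omega_le_zeta (γ : ℝ) (hγ0 : 0 < γ) (hγ1 : γ < 1) (B L : ℝ) (hB : 0 < B) (hL : 0 < L) :
    ((B+L) ^ (1-γ) - B ^ (1-γ)) / (1-γ) ≤
      (1/(1-γ)) * min (B ^ (-γ) * L) ((B+L) ^ (1-γ)) := by
  have hθ : 0 < 1 - γ := by linarith
  have hx : (0:ℝ) ≤ 1 + L/B := by positivity
  have h1 : (B+L) ^ (1-γ) - B ^ (1-γ) ≤ B ^ (-γ) * L := by
    have e1 : (B+L) ^ (1-γ) = B ^ (1-γ) * (1 + L/B) ^ (1-γ) := by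
      rw [← Real.mul_rpow hB.le hx]
      congr 1
      field_simp
    have e2 : (1 + L/B) ^ (1-γ) ≤ (1 + L/B) ^ (1:ℝ) :=
      Real.rpow_le_rpow_of_exponent_le (by nlinarith [div_pos hL hB]) (by linarith)
    rw [Real.rpow_one] at e2
    have e3 : (B+L) ^ (1-γ) ≤ B ^ (1-γ) * (1 + L/B) := by
      rw [e1]
      exact mul_le_mul_of_nonneg_left e2 (by positivity)
    have e4 : B ^ (1-γ) * (L/B) = B ^ (-γ) * L := by
      rw [show (1-γ) = -γ + 1 by ring, Real.rpow_add hB, Real.rpow_one]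
      field_simp
    nlinarith [Real.rpow_nonneg hB.le (1-γ)]
  have h2 : (B+L) ^ (1-γ) - B ^ (1-γ) ≤ (B+L) ^ (1-γ) := by
    nlinarith [Real.rpow_nonneg hB.le (1-γ)]
  have h3 : (B+L) ^ (1-γ) - B ^ (1-γ) ≤ min (B ^ (-γ) * L) ((B+L) ^ (1-γ)) :=
    le_min h1 h2
  calc ((B+L) ^ (1-γ) - B ^ (1-γ)) / (1-γ)
      ≤ (min (B ^ (-γ) * L) ((B+L) ^ (1-γ))) / (1-γ) := by
        gcongr
    _ = (1/(1-γ)) * min (B ^ (-γ) * L) ((B+L) ^ (1-γ)) := by ring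

lemma zeta_le_omega (γ : ℝ) (hγ0 : 0 < γ) (hγ1 : γ < 1) :
    ∃ K > 0, ∀ B L : ℝ, 0 < B → 0 < L →
      min (B ^ (-γ) * L) ((B+L) ^ (1-γ)) ≤
        K * (((B+L) ^ (1-γ) - B ^ (1-γ)) / (1-γ)) := by
  have hθ : 0 < 1 - γ := by linarith
  have h2θ : (1:ℝ) < 2 ^ (1-γ) := by
    have := Real.one_lt_rpow_iff_of_pos (x := 2) (by norm_num) (y := 1-γ)
    rw [this]
    left; constructor <;> linarith
  have hc1 : 0 < (1-γ) / (2 ^ (1-γ) - 1) := div_pos hθ (by linarith)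
  have hc2pos : (0:ℝ) < 1 - 2 ^ (-(1-γ)) := by
    have : (2:ℝ) ^ (-(1-γ)) < 2 ^ (0:ℝ) :=
      Real.rpow_lt_rpow_of_exponent_lt (by norm_num) (by linarith)
    rw [Real.rpow_zero] at this
    linarith
  have hc2 : 0 < (1-γ) / (1 - 2 ^ (-(1-γ))) := div_pos hθ hc2pos
  refine ⟨(1-γ) / (2 ^ (1-γ) - 1) + (1-γ) / (1 - 2 ^ (-(1-γ))), by linarith, ?_⟩
  intro B L hB hL
  set θ := 1 - γ with hθdef
  have hA : 0 < B + L := by linarith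
  have hωpos : 0 ≤ ((B+L) ^ θ - B ^ θ) / θ := by
    have : B ^ θ ≤ (B+L) ^ θ := Real.rpow_le_rpow hB.le (by linarith) hθ.le
    have := sub_nonneg.2 this
    positivity
  rcases le_or_gt L B with hLB | hBL
  · -- case L ≤ B : use chord inequality, min ≤ B^(-γ) L ≤ (A^θ - B^θ)/(2^θ-1)
    have hx0 : 0 ≤ L / B := by positivity
    have hx1 : L / B ≤ 1 := (div_le_one hB).2 hLB
    have chord2 : 1 + (2 ^ θ - 1) * (L/B) ≤ (1 + L/B) ^ θ := by
      have hcc := Real.concaveOn_rpow hθ.le (by linarith : θ ≤ 1)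
      have hch := hcc.2 (Set.mem_Ici.2 (by norm_num : (0:ℝ) ≤ 1))
        (Set.mem_Ici.2 (by norm_num : (0:ℝ) ≤ 2))
        (by linarith : 0 ≤ 1 - L/B) hx0 (by ring)
      simp only [smul_eq_mul, Real.one_rpow] at hch
      have heq : (1 - L / B) * 1 + L / B * 2 = 1 + L/B := by ring
      rw [heq] at hch
      nlinarith [hch]
    -- A^θ - B^θ ≥ (2^θ - 1) * B^(-γ) * L
    have key : (2 ^ θ - 1) * (B ^ (-γ) * L) ≤ (B+L) ^ θ - B ^ θ := by
      have e1 : (B+L) ^ θ = B ^ θ * (1 + L/B) ^ θ := by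
        rw [← Real.mul_rpow hB.le (by positivity : (0:ℝ) ≤ 1 + L/B)]
        congr 1
        field_simp
      have e4 : B ^ θ * (L/B) = B ^ (-γ) * L := by
        rw [hθdef, show (1-γ) = -γ + 1 by ring, Real.rpow_add hB, Real.rpow_one]
        field_simp
      have e5 : B ^ θ * (1 + (2 ^ θ - 1) * (L/B)) ≤ B ^ θ * (1 + L/B) ^ θ :=
        mul_le_mul_of_nonneg_left chord2 (Real.rpow_nonneg hB.le θ)
      have e6 : B ^ θ * (1 + (2 ^ θ - 1) * (L/B)) = B ^ θ + (2 ^ θ - 1) * (B ^ θ * (L/B)) := by ring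
      rw [e6, e4] at e5
      rw [e1]
      linarith
    have hmin : min (B ^ (-γ) * L) ((B+L) ^ θ) ≤ B ^ (-γ) * L := min_le_left _ _
    calc min (B ^ (-γ) * L) ((B+L) ^ θ)
        ≤ B ^ (-γ) * L := hmin
      _ ≤ ((B+L) ^ θ - B ^ θ) / (2 ^ θ - 1) := by
          rw [le_div_iff₀ (by linarith)]
          linarith [key]
      _ = (θ / (2 ^ θ - 1)) * (((B+L) ^ θ - B ^ θ) / θ) := by
          rw [div_mul_div_comm, mul_comm (2 ^ θ - 1) θ, ← div_mul_div_comm,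
            div_self (ne_of_gt hθ), one_mul]
      _ ≤ (θ / (2 ^ θ - 1) + θ / (1 - 2 ^ (-θ))) * (((B+L) ^ θ - B ^ θ) / θ) := by
          nlinarith [hωpos, hc2]
  · -- case B < L : min ≤ A^θ and A^θ - B^θ ≥ (1 - 2^(-θ)) A^θ
    have hBA2 : 2 * B < B + L := by linarith
    have hBhalf : B ^ θ ≤ (B+L) ^ θ * 2 ^ (-θ) := by
      have h1 : B ≤ (B+L) / 2 := by linarith
      have h2 : B ^ θ ≤ ((B+L)/2) ^ θ := Real.rpow_le_rpow hB.le h1 hθ.le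
      have h3 : ((B+L)/2) ^ θ = (B+L) ^ θ / 2 ^ θ := Real.div_rpow hA.le (by norm_num : (0:ℝ) ≤ 2) θ
      have h4 : (B+L) ^ θ / 2 ^ θ = (B+L) ^ θ * 2 ^ (-θ) := by
        rw [Real.rpow_neg (by norm_num)]
        ring
      rw [h3, h4] at h2
      exact h2
    have key : (1 - 2 ^ (-θ)) * (B+L) ^ θ ≤ (B+L) ^ θ - B ^ θ := by nlinarith
    calc min (B ^ (-γ) * L) ((B+L) ^ θ)
        ≤ (B+L) ^ θ := min_le_right _ _
      _ ≤ ((B+L) ^ θ - B ^ θ) / (1 - 2 ^ (-θ)) := by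
          rw [le_div_iff₀ hc2pos]
          linarith [key]
      _ = (θ / (1 - 2 ^ (-θ))) * (((B+L) ^ θ - B ^ θ) / θ) := by
          rw [div_mul_div_comm, mul_comm (1 - 2 ^ (-θ)) θ, ← div_mul_div_comm,
            div_self (ne_of_gt hθ), one_mul]
      _ ≤ (θ / (2 ^ θ - 1) + θ / (1 - 2 ^ (-θ))) * (((B+L) ^ θ - B ^ θ) / θ) := by
          nlinarith [hωpos, hc1]


lemma min_rpow {x y β : ℝ} (hx : 0 ≤ x) (hy : 0 ≤ y) (hβ : 0 ≤ β) :
    (min x y) ^ β = min (x ^ β) (y ^ β) := by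
  rcases le_total x y with h | h
  · rw [min_eq_left h, min_eq_left (Real.rpow_le_rpow hx h hβ)]
  · rw [min_eq_right h, min_eq_right (Real.rpow_le_rpow hy h hβ)]

lemma zeta_pow (κ β : ℝ) (hβ : 0 < β) (B L : ℝ) (hB : 0 < B) (hL : 0 < L) :
    (min (B ^ (-(κ/β)) * L) ((B+L) ^ (1-κ/β))) ^ β
      = min (B ^ (-κ) * L ^ β) ((B+L) ^ (β-κ)) := by
  rw [min_rpow (by positivity) (by positivity) hβ.le]
  congr 1
  · rw [Real.mul_rpow (by positivity) hL.le, ← Real.rpow_mul hB.le]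
    congr 2
    field_simp
  · rw [← Real.rpow_mul (by positivity : (0:ℝ) ≤ B + L)]
    congr 1
    field_simp

-- partition monotonicity
lemma part_lt {N : ℕ} {p : ℕ → ℝ} (h : ∀ i < N, p i < p (i + 1)) :
    ∀ i j, i < j → j ≤ N → p i < p j := by
  intro i j hij hjN
  induction j with
  | zero => omega
  | succ j ih =>
    rcases Nat.lt_succ_iff_lt_or_eq.1 hij with h' | h'
    · exact lt_trans (ih h' (by omega)) (h j (by omega))
    · subst h'; exact h i (by omega)

lemma part_le {N : ℕ} {p : ℕ → ℝ} (h : ∀ i < N, p i < p (i + 1)) :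
    ∀ i j, i ≤ j → j ≤ N → p i ≤ p j := by
  intro i j hij hjN
  rcases eq_or_lt_of_le hij with rfl | h'
  · exact le_refl _
  · exact (part_lt h i j h' hjN).le

-- telescoping
lemma tele_sum (ω : ℝ → ℝ → ℝ) (hadd : ∀ u m v, ω u m + ω m v = ω u v)
    (p : ℕ → ℝ) (N : ℕ) :
    ∑ i ∈ range N, ω (p i) (p (i+1)) = ω (p 0) (p N) := by
  induction N with
  | zero =>
    have h := hadd (p 0) (p 0) (p 0)
    simp only [range_zero, sum_empty]
    linarith
  | succ n ih => rw [sum_range_succ, ih, hadd (p 0) (p n) (p (n+1))]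

noncomputable def sewC (β : ℝ) : ℝ := ∑' k : ℕ, (2 / ((k:ℝ)+1)) ^ β

lemma sew_summable {β : ℝ} (hβ : 1 < β) : Summable (fun k : ℕ => (2/((k:ℝ)+1))^β) := by
  have h : Summable (fun n : ℕ => 1 / (n:ℝ) ^ β) := Real.summable_one_div_nat_rpow.2 hβ
  have h2 : Summable (fun n : ℕ => 1 / ((n:ℝ)+1) ^ β) := by
    have := (summable_nat_add_iff 1).2 h
    simpa using this
  have h3 := h2.mul_left ((2:ℝ) ^ β)
  refine h3.congr fun k => ?_
  rw [Real.div_rpow (by norm_num) (by positivity)]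
  ring

lemma sewC_nonneg {β : ℝ} (hβ : 1 < β) : 0 ≤ sewC β :=
  tsum_nonneg fun k => Real.rpow_nonneg (by positivity) β

lemma partial_le_sewC {β : ℝ} (hβ : 1 < β) (n : ℕ) :
    ∑ k ∈ range n, (2/((k:ℝ)+1))^β ≤ sewC β :=
  Summable.sum_le_tsum (range n) (fun k _ => Real.rpow_nonneg (by positivity) β) (sew_summable hβ)

lemma exists_fine_partition (s t δ : ℝ) (hst : s < t) (hδ : 0 < δ) :
    ∃ N p, IsPartition s t N p ∧ ∀ i < N, p (i+1) - p i < δ := by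
  obtain ⟨N, hN⟩ := exists_nat_gt ((t-s)/δ)
  have hNR : (0:ℝ) < N := by
    have h0 : 0 < (t-s)/δ := div_pos (by linarith) hδ
    linarith
  refine ⟨N, fun i => s + i * ((t-s)/N), ⟨by simp, ?_, ?_⟩, ?_⟩
  · field_simp
    ring
  · intro i _
    have : (i:ℝ) < (i+1:ℕ) := by exact_mod_cast Nat.lt_succ_self i
    push_cast
    nlinarith [div_pos (by linarith : (0:ℝ) < t - s) hNR]
  · intro i _
    have step : (s + ((i:ℝ)+1) * ((t-s)/N)) - (s + (i:ℝ) * ((t-s)/N)) = (t-s)/N := by ring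
    push_cast
    rw [step]
    rw [div_lt_iff₀ hNR]
    rw [div_lt_iff₀ hδ] at hN
    linarith
theorem sewing_bound {E : Type*} [NormedAddCommGroup E] (β : ℝ) (hβ : 1 < β)
    (ω : ℝ → ℝ → ℝ) (hadd : ∀ u m v, ω u m + ω m v = ω u v)
    (s t : ℝ) (hst : s < t)
    (hω : ∀ u v, s ≤ u → u ≤ v → v ≤ t → 0 ≤ ω u v)
    (Φ : ℝ → ℝ → E) (M : ℝ) (hM : 0 ≤ M)
    (hδ : ∀ u m v, s ≤ u → u < m → m < v → v ≤ t →
      ‖Φ u v - Φ u m - Φ m v‖ ≤ M * ω u v ^ β) :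
    ∀ N p, IsPartition s t N p →
      ‖(∑ i ∈ range N, Φ (p i) (p (i+1))) - Φ s t‖ ≤
        M * (∑ k ∈ range (N-1), (2/((k:ℝ)+1))^β) * ω s t ^ β := by
  intro N
  induction N using Nat.strong_induction_on with
  | _ N IH =>
  intro p hp
  obtain ⟨hp0, hpN, hinc⟩ := hp
  rcases Nat.lt_or_ge N 2 with hN2 | hN2
  · interval_cases N
    · rw [hp0] at hpN; exact absurd hpN hst.ne
    · simp [hp0, hpN]
  -- basic position facts
  have hmem : ∀ i ≤ N, s ≤ p i ∧ p i ≤ t := by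
    intro i hi
    constructor
    · rw [← hp0]; exact part_le hinc 0 i (by omega) hi
    · rw [← hpN]; exact part_le hinc i N hi (le_refl _)
  have hωstep : ∀ i j, i ≤ j → j ≤ N → 0 ≤ ω (p i) (p j) := by
    intro i j hij hjN
    exact hω _ _ (hmem i (by omega)).1 (part_le hinc i j hij hjN) (hmem j hjN).2
  -- choose the interior point with minimal ω (p (i-1)) (p (i+1))
  have hne : (Ico 1 N).Nonempty := ⟨1, mem_Ico.2 ⟨le_refl _, by omega⟩⟩
  obtain ⟨i, hiMem, hiMin⟩ := exists_min_image (Ico 1 N) (fun i => ω (p (i-1)) (p (i+1))) hne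
  have hi1 : 1 ≤ i := (mem_Ico.1 hiMem).1
  have hiN : i < N := (mem_Ico.1 hiMem).2
  -- sum of the g i is at most 2 ω s t
  have hsplit : ∀ j ∈ Ico 1 N, ω (p (j-1)) (p (j+1)) =
      ω (p (j-1)) (p j) + ω (p j) (p (j+1)) := fun j _ => (hadd _ (p j) _).symm
  have hsum1 : ∑ j ∈ Ico 1 N, ω (p (j-1)) (p j) ≤ ω s t := by
    rw [sum_Ico_eq_sum_range]
    have he : ∀ k, ω (p (1 + k - 1)) (p (1 + k)) = ω (p k) (p (k+1)) := by
      intro k; congr 1 <;> congr 1 <;> omega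
    rw [Finset.sum_congr rfl (fun k _ => he k)]
    have h1 : ∑ k ∈ range (N-1), ω (p k) (p (k+1)) = ω (p 0) (p (N-1)) :=
      tele_sum ω hadd p (N-1)
    rw [h1, ← hp0, ← hpN]
    have h2 := hadd (p 0) (p (N-1)) (p N)
    have h3 : 0 ≤ ω (p (N-1)) (p N) := hωstep (N-1) N (by omega) (le_refl _)
    linarith
  have hsum2 : ∑ j ∈ Ico 1 N, ω (p j) (p (j+1)) ≤ ω s t := by
    have hsub : Ico 1 N ⊆ range N := by
      intro x hx; rw [mem_range]; exact (mem_Ico.1 hx).2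
    have := sum_le_sum_of_subset_of_nonneg hsub
      (fun j hj _ => hωstep j (j+1) (by omega) (by rw [mem_range] at hj; omega))
    have h1 : ∑ k ∈ range N, ω (p k) (p (k+1)) = ω (p 0) (p N) := tele_sum ω hadd p N
    rw [h1, hp0, hpN] at this
    exact this
  have hcard : (Ico 1 N).card = N - 1 := by rw [Nat.card_Ico]
  have hgsum : ∑ j ∈ Ico 1 N, ω (p (j-1)) (p (j+1)) ≤ 2 * ω s t := by
    rw [Finset.sum_congr rfl hsplit, sum_add_distrib]
    linarith
  have hmin_le : (N - 1 : ℝ) * ω (p (i-1)) (p (i+1)) ≤ 2 * ω s t := by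
    have hle := Finset.card_nsmul_le_sum (Ico 1 N) (fun j => ω (p (j-1)) (p (j+1)))
      (ω (p (i-1)) (p (i+1))) hiMin
    rw [hcard, nsmul_eq_mul] at hle
    have : ((N - 1 : ℕ) : ℝ) = (N : ℝ) - 1 := by
      have : 1 ≤ N := by omega
      push_cast [Nat.cast_sub this]
      ring
    rw [this] at hle
    linarith
  have hN1R : (0:ℝ) < (N:ℝ) - 1 := by
    have : (2:ℝ) ≤ (N:ℝ) := by exact_mod_cast hN2
    linarith
  have hgmin : ω (p (i-1)) (p (i+1)) ≤ 2 * ω s t / ((N:ℝ) - 1) := by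
    rw [le_div_iff₀ hN1R]; linarith
  -- the reduced partition
  set q : ℕ → ℝ := fun j => p (if j < i then j else j + 1) with hq
  have hq' : IsPartition s t (N-1) q := by
    refine ⟨?_, ?_, ?_⟩
    · simp only [hq]; rw [if_pos (by omega : 0 < i)]; exact hp0
    · simp only [hq]; rw [if_neg (by omega : ¬ (N-1 < i))]
      have : N - 1 + 1 = N := by omega
      rw [this]; exact hpN
    · intro j hj
      simp only [hq]
      by_cases h1 : j < i
      · rw [if_pos h1]
        by_cases h2 : j + 1 < i
        · rw [if_pos h2]; exact hinc j (by omega)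
        · rw [if_neg h2]; exact part_lt hinc j (j+2) (by omega) (by omega)
      · rw [if_neg h1, if_neg (by omega)]
        exact hinc (j+1) (by omega)
  -- sum surgery
  have hsurg : (∑ j ∈ range N, Φ (p j) (p (j+1))) -
      (∑ j ∈ range (N-1), Φ (q j) (q (j+1))) =
      Φ (p (i-1)) (p i) + Φ (p i) (p (i+1)) - Φ (p (i-1)) (p (i+1)) := by
    have hqlow : ∀ j, j < i - 1 → Φ (q j) (q (j+1)) = Φ (p j) (p (j+1)) := by
      intro j hj
      simp only [hq]
      rw [if_pos (by omega), if_pos (by omega)]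
    have hqmid : Φ (q (i-1)) (q (i-1+1)) = Φ (p (i-1)) (p (i+1)) := by
      simp only [hq]
      rw [if_pos (by omega), if_neg (by omega)]
      congr 2 <;> omega
    have hqhigh : ∀ j, i ≤ j → Φ (q j) (q (j+1)) = Φ (p (j+1)) (p (j+2)) := by
      intro j hj
      simp only [hq]
      rw [if_neg (by omega), if_neg (by omega)]
    -- split both sums
    have e1 : ∑ j ∈ range N, Φ (p j) (p (j+1)) =
        (∑ j ∈ range (i-1), Φ (p j) (p (j+1))) + ∑ j ∈ Ico (i-1) N, Φ (p j) (p (j+1)) := by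
      rw [range_eq_Ico, ← sum_Ico_consecutive _ (by omega : 0 ≤ i-1) (by omega : i-1 ≤ N),
        ← range_eq_Ico]
    have e2 : ∑ j ∈ range (N-1), Φ (q j) (q (j+1)) =
        (∑ j ∈ range (i-1), Φ (q j) (q (j+1))) + ∑ j ∈ Ico (i-1) (N-1), Φ (q j) (q (j+1)) := by
      rw [range_eq_Ico, ← sum_Ico_consecutive _ (by omega : 0 ≤ i-1) (by omega : i-1 ≤ N-1),
        ← range_eq_Ico]
    have e3 : ∑ j ∈ range (i-1), Φ (q j) (q (j+1)) = ∑ j ∈ range (i-1), Φ (p j) (p (j+1)) :=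
      Finset.sum_congr rfl (fun j hj => hqlow j (mem_range.1 hj))
    have e4 : ∑ j ∈ Ico (i-1) N, Φ (p j) (p (j+1)) =
        Φ (p (i-1)) (p (i-1+1)) + ∑ j ∈ Ico i N, Φ (p j) (p (j+1)) := by
      have hii : i - 1 + 1 = i := by omega
      rw [sum_eq_sum_Ico_succ_bot (by omega : i-1 < N), hii]
    have e5 : ∑ j ∈ Ico i N, Φ (p j) (p (j+1)) =
        Φ (p i) (p (i+1)) + ∑ j ∈ Ico (i+1) N, Φ (p j) (p (j+1)) := by
      rw [sum_eq_sum_Ico_succ_bot (by omega : i < N)]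
    have e6 : ∑ j ∈ Ico (i-1) (N-1), Φ (q j) (q (j+1)) =
        Φ (q (i-1)) (q (i-1+1)) + ∑ j ∈ Ico i (N-1), Φ (q j) (q (j+1)) := by
      have hii : i - 1 + 1 = i := by omega
      rw [sum_eq_sum_Ico_succ_bot (by omega : i-1 < N-1), hii]
    have e7 : ∑ j ∈ Ico i (N-1), Φ (q j) (q (j+1)) =
        ∑ j ∈ Ico (i+1) N, Φ (p j) (p (j+1)) := by
      rw [sum_Ico_eq_sum_range, sum_Ico_eq_sum_range]
      have hlen : N - 1 - i = N - (i+1) := by omega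
      rw [hlen]
      refine Finset.sum_congr rfl (fun k hk => ?_)
      rw [hqhigh (i + k) (by omega)]
      congr 2 <;> omega
    have e8 : p (i-1+1) = p i := by congr 1; omega
    rw [e1, e2, e3, e4, e5, e6, e7, hqmid, e8]
    abel
  -- apply the triple increment bound
  have hδi : ‖Φ (p (i-1)) (p (i+1)) - Φ (p (i-1)) (p i) - Φ (p i) (p (i+1))‖ ≤
      M * ω (p (i-1)) (p (i+1)) ^ β :=
    hδ _ _ _ (hmem (i-1) (by omega)).1 (part_lt hinc (i-1) i (by omega) (by omega))
      (part_lt hinc i (i+1) (by omega) (by omega)) (hmem (i+1) (by omega)).2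
  have hωst : 0 ≤ ω s t := hω s t (le_refl s) hst.le (le_refl t)
  have hstep : M * ω (p (i-1)) (p (i+1)) ^ β ≤ M * ((2/((N:ℝ)-1))^β * ω s t ^ β) := by
    have h0 : 0 ≤ ω (p (i-1)) (p (i+1)) := hωstep (i-1) (i+1) (by omega) (by omega)
    have h1 : ω (p (i-1)) (p (i+1)) ^ β ≤ (2 * ω s t / ((N:ℝ)-1)) ^ β :=
      Real.rpow_le_rpow h0 hgmin (by linarith)
    have h2 : (2 * ω s t / ((N:ℝ)-1)) ^ β = (2/((N:ℝ)-1))^β * ω s t ^ β := by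
      rw [show 2 * ω s t / ((N:ℝ)-1) = (2/((N:ℝ)-1)) * ω s t by ring,
        Real.mul_rpow (by positivity) hωst]
    rw [h2] at h1
    exact mul_le_mul_of_nonneg_left h1 hM
  -- induction hypothesis on the reduced partition
  have hIH := IH (N-1) (by omega) q hq'
  -- combine
  have htri : ‖(∑ j ∈ range N, Φ (p j) (p (j+1))) - Φ s t‖ ≤
      ‖Φ (p (i-1)) (p (i+1)) - Φ (p (i-1)) (p i) - Φ (p i) (p (i+1))‖ +
      ‖(∑ j ∈ range (N-1), Φ (q j) (q (j+1))) - Φ s t‖ := by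
    have hS : (∑ j ∈ range N, Φ (p j) (p (j+1))) =
        (Φ (p (i-1)) (p i) + Φ (p i) (p (i+1)) - Φ (p (i-1)) (p (i+1))) +
        (∑ j ∈ range (N-1), Φ (q j) (q (j+1))) := by
      rw [← hsurg]; abel
    have hd : (∑ j ∈ range N, Φ (p j) (p (j+1))) - Φ s t =
        -(Φ (p (i-1)) (p (i+1)) - Φ (p (i-1)) (p i) - Φ (p i) (p (i+1))) +
        ((∑ j ∈ range (N-1), Φ (q j) (q (j+1))) - Φ s t) := by
      rw [hS]; abel
    rw [hd]
    calc ‖_ + _‖ ≤ ‖-(Φ (p (i-1)) (p (i+1)) - Φ (p (i-1)) (p i) - Φ (p i) (p (i+1)))‖ +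
          ‖(∑ j ∈ range (N-1), Φ (q j) (q (j+1))) - Φ s t‖ := norm_add_le _ _
      _ = _ := by rw [norm_neg]
  -- final arithmetic: the new term corresponds to k = N-2
  have hsum_step : (∑ k ∈ range (N-1), (2/((k:ℝ)+1))^β) =
      (∑ k ∈ range (N-2), (2/((k:ℝ)+1))^β) + (2/((N:ℝ)-1))^β := by
    have h : N - 1 = (N - 2) + 1 := by omega
    rw [h, sum_range_succ]
    congr 2
    have h2 : 2 ≤ N := hN2
    push_cast [Nat.cast_sub h2]
    ring
  calc ‖(∑ j ∈ range N, Φ (p j) (p (j+1))) - Φ s t‖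
      ≤ M * ω (p (i-1)) (p (i+1)) ^ β +
        M * (∑ k ∈ range (N-1-1), (2/((k:ℝ)+1))^β) * ω s t ^ β := by
        refine le_trans htri (add_le_add hδi hIH)
    _ ≤ M * ((2/((N:ℝ)-1))^β * ω s t ^ β) +
        M * (∑ k ∈ range (N-2), (2/((k:ℝ)+1))^β) * ω s t ^ β := by
        have : N - 1 - 1 = N - 2 := by omega
        rw [this]
        linarith [hstep]
    _ = M * (∑ k ∈ range (N-1), (2/((k:ℝ)+1))^β) * ω s t ^ β := by
        rw [hsum_step]
        ring

end SewingHelpers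

theorem statement8.{u} (β κ : ℝ) (hβ : 1 < β) (hκ0 : 0 < κ) (hκ1 : κ < 1) :
    ∃ C : ℝ, 0 < C ∧
      ∀ (E : Type u) [NormedAddCommGroup E] [NormedSpace ℝ E] [CompleteSpace E],
      ∀ (T : ℝ), 0 < T →
      ∀ (Ξ : ℝ → ℝ → ℝ → E) (A A₂ : ℝ), 0 ≤ A → 0 ≤ A₂ →
      -- `‖δΞ‖_{(β,κ),1} ≤ A`
      (∀ s m t τ : ℝ, 0 ≤ s → s < m → m < t → t ≤ τ → τ ≤ T →
          ‖Ξ τ t s - Ξ τ t m - Ξ τ m s‖ ≤ A * mSing τ t s κ β) →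
      -- `‖δΞ‖_{(β,κ),1,2} ≤ A₂`
      (∀ s m t τ' τ : ℝ, ∀ η ∈ Set.Icc (0 : ℝ) 1,
          0 ≤ s → s < m → m < t → t < τ' → τ' < τ → τ ≤ T →
          ‖(Ξ τ t s - Ξ τ t m - Ξ τ m s) - (Ξ τ' t s - Ξ τ' t m - Ξ τ' m s)‖ ≤
            A₂ * ((τ - τ') ^ η * (τ' - t) ^ (-η) * mSing τ' t s κ β)) →
      ∀ I : ℝ → ℝ → ℝ → E,
      -- `I(Ξ^τ)_{ts}` is the limit of the Riemann sums of `Ξ`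
      (∀ s t τ : ℝ, 0 ≤ s → s ≤ t → t ≤ τ → τ ≤ T →
          RSLimit s t (fun u v => Ξ τ v u) (I τ t s)) →
      ∀ s t τ' τ : ℝ, ∀ η ∈ Set.Icc (0 : ℝ) 1,
        0 ≤ s → s < t → t < τ' → τ' < τ → τ ≤ T →
        ‖(I τ t s - I τ' t s) - (Ξ τ t s - Ξ τ' t s)‖ ≤
          C * A₂ * ((τ - τ') ^ η * (τ' - t) ^ (-η) * mSing τ' t s κ β) := by
  have hβ0 : 0 < β := by linarith
  have hγ0 : 0 < κ / β := by positivity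
  have hγ1 : κ / β < 1 := by rw [div_lt_one hβ0]; linarith
  have hθ : 0 < 1 - κ / β := by linarith
  obtain ⟨K, hK, hKle⟩ := zeta_le_omega (κ/β) hγ0 hγ1
  have hsC : 0 ≤ sewC β := sewC_nonneg hβ
  have hC0 : 0 ≤ K ^ β * sewC β * (1/(1-κ/β)) ^ β :=
    mul_nonneg (mul_nonneg (Real.rpow_nonneg hK.le β) hsC)
      (Real.rpow_nonneg (by positivity) β)
  refine ⟨K ^ β * sewC β * (1/(1-κ/β)) ^ β + 1, by linarith, ?_⟩
  intro E _ _ _ T hT Ξ A A₂ hA0 hA₂0 hA hA₂ I hI s t τ' τ η hη hs hst htτ' hτ'τ hτT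
  have hτ't : (0:ℝ) < τ' - t := by linarith
  have hττ' : (0:ℝ) ≤ τ - τ' := by linarith
  have hX0 : 0 ≤ (τ - τ') ^ η * (τ' - t) ^ (-η) :=
    mul_nonneg (Real.rpow_nonneg hττ' η) (Real.rpow_nonneg (by linarith) _)
  -- the control
  set ω : ℝ → ℝ → ℝ := fun a b => ((τ' - a) ^ (1-κ/β) - (τ' - b) ^ (1-κ/β)) / (1-κ/β) with hωdef
  have hadd : ∀ u m v, ω u m + ω m v = ω u v := by
    intro u m v; simp only [hωdef]; ring
  have hωnn : ∀ u v, s ≤ u → u ≤ v → v ≤ t → 0 ≤ ω u v := by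
    intro u v hsu huv hvt
    have h1 : (τ' - v) ^ (1-κ/β) ≤ (τ' - u) ^ (1-κ/β) :=
      Real.rpow_le_rpow (by linarith) (by linarith) hθ.le
    have h2 := sub_nonneg.2 h1
    simp only [hωdef]
    positivity
  set Φ : ℝ → ℝ → E := fun u v => Ξ τ v u - Ξ τ' v u with hΦdef
  set M : ℝ := A₂ * ((τ - τ') ^ η * (τ' - t) ^ (-η)) * K ^ β with hMdef
  have hM0 : 0 ≤ M := mul_nonneg (mul_nonneg hA₂0 hX0) (Real.rpow_nonneg hK.le β)
  -- key pointwise bound : mSing in terms of the control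
  have hmS : ∀ u v, s ≤ u → u < v → v ≤ t → mSing τ' v u κ β ≤ K ^ β * ω u v ^ β := by
    intro u v hsu huv hvt
    have hB : 0 < τ' - v := by linarith
    have hL : 0 < v - u := by linarith
    have hvτ' : v < τ' := by linarith
    have hBL : τ' - u = (τ' - v) + (v - u) := by ring
    have hz := zeta_pow κ β hβ0 (τ' - v) (v - u) hB hL
    have hzeta := hKle (τ' - v) (v - u) hB hL
    have hζnn : 0 ≤ min ((τ'-v) ^ (-(κ/β)) * (v-u)) (((τ'-v)+(v-u)) ^ (1-κ/β)) :=
      le_min (by positivity) (by positivity)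
    have hωuv : ω u v = ((((τ'-v)+(v-u)) ^ (1-κ/β)) - (τ'-v) ^ (1-κ/β)) / (1-κ/β) := by
      simp only [hωdef]
      rw [hBL]
    have hωnn' : 0 ≤ ω u v := hωnn u v hsu huv.le hvt
    calc mSing τ' v u κ β
        = (min ((τ'-v) ^ (-(κ/β)) * (v-u)) (((τ'-v)+(v-u)) ^ (1-κ/β))) ^ β := by
          rw [mSing, if_pos hvτ', hBL, ← hz]
      _ ≤ (K * ω u v) ^ β := by
          apply Real.rpow_le_rpow hζnn _ hβ0.le
          rw [hωuv]
          exact hzeta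
      _ = K ^ β * ω u v ^ β := Real.mul_rpow hK.le hωnn'
  -- increment bound for Φ
  have hδΦ : ∀ u m v, s ≤ u → u < m → m < v → v ≤ t →
      ‖Φ u v - Φ u m - Φ m v‖ ≤ M * ω u v ^ β := by
    intro u m v hsu hum hmv hvt
    have h0u : 0 ≤ u := le_trans hs hsu
    have hvτ' : v < τ' := by linarith
    have hbound := hA₂ u m v τ' τ η hη h0u hum hmv hvτ' hτ'τ hτT
    have heq : Φ u v - Φ u m - Φ m v =
        (Ξ τ v u - Ξ τ v m - Ξ τ m u) - (Ξ τ' v u - Ξ τ' v m - Ξ τ' m u) := by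
      simp only [hΦdef]; abel
    rw [heq]
    refine le_trans hbound ?_
    have hmono : (τ' - v) ^ (-η) ≤ (τ' - t) ^ (-η) :=
      Real.rpow_le_rpow_of_nonpos hτ't (by linarith) (by simpa using hη.1)
    have hmS0 : 0 ≤ mSing τ' v u κ β := by
      rw [mSing, if_pos hvτ']
      exact le_min (mul_nonneg (Real.rpow_nonneg (by linarith) _)
        (Real.rpow_nonneg (by linarith) _)) (Real.rpow_nonneg (by linarith) _)
    have step1 : (τ - τ') ^ η * (τ' - v) ^ (-η) * mSing τ' v u κ β ≤
        (τ - τ') ^ η * (τ' - t) ^ (-η) * mSing τ' v u κ β := by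
      apply mul_le_mul_of_nonneg_right _ hmS0
      exact mul_le_mul_of_nonneg_left hmono (Real.rpow_nonneg hττ' η)
    have step2 : (τ - τ') ^ η * (τ' - t) ^ (-η) * mSing τ' v u κ β ≤
        (τ - τ') ^ η * (τ' - t) ^ (-η) * (K ^ β * ω u v ^ β) :=
      mul_le_mul_of_nonneg_left (hmS u v hsu (hum.trans hmv) hvt) hX0
    calc A₂ * ((τ - τ') ^ η * (τ' - v) ^ (-η) * mSing τ' v u κ β)
        ≤ A₂ * ((τ - τ') ^ η * (τ' - t) ^ (-η) * (K ^ β * ω u v ^ β)) := by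
          apply mul_le_mul_of_nonneg_left _ hA₂0
          exact le_trans step1 step2
      _ = M * ω u v ^ β := by rw [hMdef]; ring
  -- the sewing estimate, for any partition
  have hsew : ∀ N p, IsPartition s t N p →
      ‖(∑ i ∈ Finset.range N, Φ (p i) (p (i+1))) - Φ s t‖ ≤ M * sewC β * ω s t ^ β := by
    intro N p hp
    refine le_trans (sewing_bound β hβ ω hadd s t hst hωnn Φ M hM0 hδΦ N p hp) ?_
    have h1 : (∑ k ∈ Finset.range (N-1), (2/((k:ℝ)+1))^β) ≤ sewC β := partial_le_sewC hβ _
    have h2 : 0 ≤ ω s t ^ β := Real.rpow_nonneg (hωnn s t le_rfl hst.le le_rfl) β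
    have h3 : M * (∑ k ∈ Finset.range (N-1), (2/((k:ℝ)+1))^β) ≤ M * sewC β :=
      mul_le_mul_of_nonneg_left h1 hM0
    exact mul_le_mul_of_nonneg_right h3 h2
  -- ε-approximation via Riemann sums
  have key : ∀ ε > 0, ‖(I τ t s - I τ' t s) - (Ξ τ t s - Ξ τ' t s)‖ ≤
      M * sewC β * ω s t ^ β + ε := by
    intro ε hε
    obtain ⟨δ₁, hδ₁, h₁⟩ := hI s t τ hs hst.le (by linarith) hτT (ε/2) (by linarith)
    obtain ⟨δ₂, hδ₂, h₂⟩ := hI s t τ' hs hst.le (by linarith) (by linarith) (ε/2) (by linarith)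
    obtain ⟨N, p, hpart, hfine⟩ := exists_fine_partition s t (min δ₁ δ₂) hst (lt_min hδ₁ hδ₂)
    have hf1 : ∀ i < N, p (i+1) - p i < δ₁ :=
      fun i hi => lt_of_lt_of_le (hfine i hi) (min_le_left _ _)
    have hf2 : ∀ i < N, p (i+1) - p i < δ₂ :=
      fun i hi => lt_of_lt_of_le (hfine i hi) (min_le_right _ _)
    have e1 := h₁ N p hpart hf1
    have e2 := h₂ N p hpart hf2
    have e3 := hsew N p hpart
    have hsumΦ : ∑ i ∈ Finset.range N, Φ (p i) (p (i+1)) =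
        (∑ i ∈ Finset.range N, Ξ τ (p (i+1)) (p i)) -
        (∑ i ∈ Finset.range N, Ξ τ' (p (i+1)) (p i)) := by
      simp only [hΦdef, Finset.sum_sub_distrib]
    have hΦst : Φ s t = Ξ τ t s - Ξ τ' t s := rfl
    have hdecomp : (I τ t s - I τ' t s) - (Ξ τ t s - Ξ τ' t s) =
        -((∑ i ∈ Finset.range N, Ξ τ (p (i+1)) (p i)) - I τ t s)
        + ((∑ i ∈ Finset.range N, Ξ τ' (p (i+1)) (p i)) - I τ' t s)
        + ((∑ i ∈ Finset.range N, Φ (p i) (p (i+1))) - Φ s t) := by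
      rw [hsumΦ, hΦst]; abel
    rw [hdecomp]
    have tri := norm_add₃_le (E := E)
      (a := -((∑ i ∈ Finset.range N, Ξ τ (p (i+1)) (p i)) - I τ t s))
      (b := (∑ i ∈ Finset.range N, Ξ τ' (p (i+1)) (p i)) - I τ' t s)
      (c := (∑ i ∈ Finset.range N, Φ (p i) (p (i+1))) - Φ s t)
    rw [norm_neg] at tri
    refine le_trans tri ?_
    have e1' : ‖(∑ i ∈ Finset.range N, Ξ τ (p (i+1)) (p i)) - I τ t s‖ ≤ ε/2 := e1.le
    have e2' : ‖(∑ i ∈ Finset.range N, Ξ τ' (p (i+1)) (p i)) - I τ' t s‖ ≤ ε/2 := e2.le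
    linarith
  have main : ‖(I τ t s - I τ' t s) - (Ξ τ t s - Ξ τ' t s)‖ ≤ M * sewC β * ω s t ^ β :=
    le_of_forall_pos_le_add key
  -- compare the control at (s,t) with mSing
  have hfinal : M * sewC β * ω s t ^ β ≤
      (K ^ β * sewC β * (1/(1-κ/β)) ^ β) * A₂ *
        ((τ - τ') ^ η * (τ' - t) ^ (-η) * mSing τ' t s κ β) := by
    have hB : 0 < τ' - t := hτ't
    have hL : 0 < t - s := by linarith
    have hBL : τ' - s = (τ' - t) + (t - s) := by ring
    have hωle := omega_le_zeta (κ/β) hγ0 hγ1 (τ' - t) (t - s) hB hL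
    have hz := zeta_pow κ β hβ0 (τ' - t) (t - s) hB hL
    have hζnn : 0 ≤ min ((τ'-t) ^ (-(κ/β)) * (t-s)) (((τ'-t)+(t-s)) ^ (1-κ/β)) :=
      le_min (by positivity) (by positivity)
    have hωst : ω s t = ((((τ'-t)+(t-s)) ^ (1-κ/β)) - (τ'-t) ^ (1-κ/β)) / (1-κ/β) := by
      simp only [hωdef]; rw [hBL]
    have hωstnn : 0 ≤ ω s t := hωnn s t le_rfl hst.le le_rfl
    have hpow : ω s t ^ β ≤ (1/(1-κ/β)) ^ β * mSing τ' t s κ β := by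
      have h1 : ω s t ≤ (1/(1-κ/β)) *
          min ((τ'-t) ^ (-(κ/β)) * (t-s)) (((τ'-t)+(t-s)) ^ (1-κ/β)) := by
        rw [hωst]; exact hωle
      have h2 : ω s t ^ β ≤ ((1/(1-κ/β)) *
          min ((τ'-t) ^ (-(κ/β)) * (t-s)) (((τ'-t)+(t-s)) ^ (1-κ/β))) ^ β :=
        Real.rpow_le_rpow hωstnn h1 hβ0.le
      have h3 : ((1/(1-κ/β)) *
          min ((τ'-t) ^ (-(κ/β)) * (t-s)) (((τ'-t)+(t-s)) ^ (1-κ/β))) ^ β =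
          (1/(1-κ/β)) ^ β *
          (min ((τ'-t) ^ (-(κ/β)) * (t-s)) (((τ'-t)+(t-s)) ^ (1-κ/β))) ^ β :=
        Real.mul_rpow (by positivity) hζnn
      have h4 : mSing τ' t s κ β =
          (min ((τ'-t) ^ (-(κ/β)) * (t-s)) (((τ'-t)+(t-s)) ^ (1-κ/β))) ^ β := by
        rw [mSing, if_pos (by linarith : t < τ'), hBL, ← hz]
      rw [h4]
      rw [h3] at h2
      exact h2
    calc M * sewC β * ω s t ^ β
        ≤ M * sewC β * ((1/(1-κ/β)) ^ β * mSing τ' t s κ β) :=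
          mul_le_mul_of_nonneg_left hpow (mul_nonneg hM0 hsC)
      _ = (K ^ β * sewC β * (1/(1-κ/β)) ^ β) * A₂ *
          ((τ - τ') ^ η * (τ' - t) ^ (-η) * mSing τ' t s κ β) := by
          rw [hMdef]; ring
  refine le_trans main (le_trans hfinal ?_)
  have hmS0 : 0 ≤ mSing τ' t s κ β := by
    rw [mSing, if_pos (by linarith : t < τ')]
    exact le_min (mul_nonneg (Real.rpow_nonneg (by linarith) _)
      (Real.rpow_nonneg (by linarith) _)) (Real.rpow_nonneg (by linarith) _)
  have hY : 0 ≤ A₂ * ((τ - τ') ^ η * (τ' - t) ^ (-η) * mSing τ' t s κ β) :=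
    mul_nonneg hA₂0 (mul_nonneg hX0 hmS0)
  nlinarith [hY, hC0]
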